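/- Let p_u(x) = ∑_{k=0}^{2n} φ_k(x)² (the GUE density of order 2n+1 at σ²=1/2) and p_s(x) = p_u(x) + τ_{2n+1}(x), where τ_m(x) = √(m/2) φ_{m−1}(x)·(1/2)∫_ℝ sign(x−t) φ_m(t) dt. Then 2 p_s''' + 2(4n+1−x²) p_s' − 4x p_s = −3 p_u' − 6x p_u on ℝ. -/

import Mathlib

open Real MeasureTheory

/-- Physicists' Hermite polynomial `H n x = (-1)^n e^{x^2} (d/dx)^n e^{-x^2}`. -/
noncomputable def physHermite (n : ℕ) (x : ℝ) : ℝ :=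
  (-1)^n * Real.exp (x^2) * iteratedDeriv n (fun y => Real.exp (-y^2)) x

/-- Hermite function `φ k x = (2^k k! √π)^{-1/2} H_k(x) e^{-x²/2}`. -/
noncomputable def hermiteFn (k : ℕ) (x : ℝ) : ℝ :=
  (Real.sqrt (2^k * k.factorial * Real.sqrt Real.pi))⁻¹ * physHermite k x * Real.exp (-x^2/2)

/-- Confluent hypergeometric function `₁F₁(-k; b; x)` with nonpositive integer first
parameter `-k`; it is the polynomial `∑_{j=0}^{k} ((-k)_j/(b)_j) x^j/j!`, where the rising
factorial `(-k)_j = (-1)^j k!/(k-j)!`. -/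
noncomputable def oneF1neg (k : ℕ) (b x : ℝ) : ℝ :=
  ∑ j ∈ Finset.range (k+1),
    ((-1)^j * (k.descFactorial j : ℝ) / ∏ i ∈ Finset.range j, (b + i)) * x^j / (j.factorial : ℝ)

/-- GUE mean density at σ² = 1/2: partial sum of squared Hermite functions. -/
noncomputable def pGUE (n : ℕ) (x : ℝ) : ℝ := ∑ k ∈ Finset.range n, hermiteFn k x ^ 2

/-- GUE mean density with general variance σ². -/
noncomputable def pGUEvar (n : ℕ) (σ x : ℝ) : ℝ :=
  (σ * Real.sqrt 2)⁻¹ * pGUE n (x / (σ * Real.sqrt 2))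

/-- The function τₙ from the GSE/GOE densities. -/
noncomputable def tauFn (n : ℕ) (x : ℝ) : ℝ :=
  Real.sqrt (n/2) * hermiteFn (n-1) x *
    ((1/2) * ∫ t : ℝ, Real.sign (x - t) * hermiteFn n t)

/-- The function αₙ (for odd n) from the GOE density. -/
noncomputable def alphaFn (n : ℕ) (x : ℝ) : ℝ :=
  hermiteFn (n-1) x / ∫ t : ℝ, hermiteFn (n-1) t

/-!
Write `A = φ_{2n}`, `B = φ_{2n+1}`, `P = ½∫ sign(· - t) φ_{2n+1}(t) dt` and `s = √(4n+2)`.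
The ladder relations `A' = xA - sB`, `B' = sA - xB`, `P' = B` make the polynomials in
`x, A, B, P` closed under differentiation, and the Christoffel–Darboux formula gives
`p_u = (s²/2)(A² + B²) - sxAB`, while `τ_{2n+1} = (s/2)AP`. Hence `p_s` and its first three
derivatives are explicit polynomials in `x, A, B, P`, and the equation becomes a polynomial
identity in which `P` cancels; only the ladder relations enter, not the value of `s`.
-/

open Polynomial

noncomputable def cdDensity (s : ℝ) (A B : ℝ → ℝ) (x : ℝ) : ℝ :=
  s ^ 2 / 2 * (A x ^ 2 + B x ^ 2) - s * x * A x * B x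

noncomputable def gseDensity (s : ℝ) (A B P : ℝ → ℝ) (x : ℝ) : ℝ :=
  cdDensity s A B x + s / 2 * (A x * P x)

section LadderSystem

variable {s : ℝ} {A B P : ℝ → ℝ}
  (hA : ∀ x, HasDerivAt A (x * A x - s * B x) x)
  (hB : ∀ x, HasDerivAt B (s * A x - x * B x) x)
  (hP : ∀ x, HasDerivAt P (B x) x)

include hA hB

lemma hasDerivAt_cdDensity (x : ℝ) : HasDerivAt (cdDensity s A B) (-(s * A x * B x)) x := by
  have h := ((((hA x).pow 2).add ((hB x).pow 2)).const_mul (s ^ 2 / 2)).sub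
    ((((hasDerivAt_id x).const_mul s).mul (hA x)).mul (hB x))
  refine h.congr_deriv ?_
  simp only [Pi.mul_apply, id]
  push_cast
  ring

include hP

lemma hasDerivAt_gseDensity (x : ℝ) :
    HasDerivAt (gseDensity s A B P) (s / 2 * ((x * A x - s * B x) * P x - A x * B x)) x := by
  refine ((hasDerivAt_cdDensity hA hB x).add
    (((hA x).mul (hP x)).const_mul (s / 2))).congr_deriv ?_
  ring

lemma hasDerivAt_gseDensity_deriv (x : ℝ) :
    HasDerivAt (fun y => s / 2 * ((y * A y - s * B y) * P y - A y * B y))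
      (s / 2 * ((1 + x ^ 2 - s ^ 2) * A x * P x + x * A x * B x - s * A x ^ 2)) x := by
  have h := (((((hasDerivAt_id x).mul (hA x)).sub ((hB x).const_mul s)).mul (hP x)).sub
    ((hA x).mul (hB x))).const_mul (s / 2)
  refine h.congr_deriv ?_
  simp only [Pi.mul_apply, Pi.sub_apply, id]
  ring

lemma hasDerivAt_gseDensity_deriv_deriv (x : ℝ) :
    HasDerivAt (fun y => s / 2 * ((1 + y ^ 2 - s ^ 2) * A y * P y + y * A y * B y - s * A y ^ 2))
      (s / 2 * (((3 + x ^ 2 - s ^ 2) * x * A x - (1 + x ^ 2 - s ^ 2) * s * B x) * P x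
        + (2 + x ^ 2 + s ^ 2) * A x * B x - s * x * (A x ^ 2 + B x ^ 2))) x := by
  have hc : HasDerivAt (fun y : ℝ => 1 + y ^ 2 - s ^ 2) (2 * x) x := by
    refine (((hasDerivAt_pow 2 x).const_add 1).sub_const (s ^ 2)).congr_deriv ?_
    push_cast; ring
  have h := ((((hc.mul (hA x)).mul (hP x)).add (((hasDerivAt_id x).mul (hA x)).mul (hB x))).sub
    (((hA x).pow 2).const_mul s)).const_mul (s / 2)
  refine h.congr_deriv ?_
  simp only [Pi.mul_apply, id]
  push_cast
  ring

theorem gseDensity_ode (x : ℝ) :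
    2 * iteratedDeriv 3 (gseDensity s A B P) x
        + 2 * (s ^ 2 - 1 - x ^ 2) * deriv (gseDensity s A B P) x - 4 * x * gseDensity s A B P x
      = -3 * deriv (cdDensity s A B) x - 6 * x * cdDensity s A B x := by
  have d1 := funext fun y => (hasDerivAt_gseDensity hA hB hP y).deriv
  have d2 := funext fun y => (hasDerivAt_gseDensity_deriv hA hB hP y).deriv
  rw [iteratedDeriv_succ, iteratedDeriv_succ, iteratedDeriv_one, d1, d2,
    (hasDerivAt_gseDensity_deriv_deriv hA hB hP x).deriv, (hasDerivAt_cdDensity hA hB x).deriv,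
    gseDensity, cdDensity]
  beta_reduce
  ring

end LadderSystem

lemma integral_sign_sub_mul {f : ℝ → ℝ} (hf : Integrable f) (x : ℝ) :
    ∫ t, Real.sign (x - t) * f t = 2 * (∫ t in Set.Iic x, f t) - ∫ t, f t := by
  have hae : (fun t => Real.sign (x - t) * f t)
      =ᵐ[volume] fun t => 2 * (Set.Iic x).indicator f t - f t := by
    filter_upwards [Measure.ae_ne volume x] with t ht
    rcases ht.lt_or_gt with h | h
    · rw [Real.sign_of_pos (by linarith), Set.indicator_of_mem (Set.mem_Iic.2 h.le)]
      ring
    · rw [Real.sign_of_neg (by linarith), Set.indicator_of_notMem (Set.notMem_Iic.2 h)]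
      ring
  rw [integral_congr_ae hae, integral_sub ((hf.indicator measurableSet_Iic).const_mul 2) hf,
    integral_const_mul, integral_indicator measurableSet_Iic]

noncomputable def signIntegral (f : ℝ → ℝ) (x : ℝ) : ℝ :=
  1 / 2 * ∫ t, Real.sign (x - t) * f t

lemma hasDerivAt_signIntegral {f : ℝ → ℝ} {x : ℝ} (hf : Integrable f)
    (hfx : ContinuousAt f x) : HasDerivAt (signIntegral f) (f x) x := by
  have hsplit : signIntegral f
      = fun y => ((∫ t in Set.Iic 0, f t) - 1 / 2 * ∫ t, f t) + ∫ t in (0 : ℝ)..y, f t := by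
    funext y
    rw [signIntegral, integral_sign_sub_mul hf,
      ← intervalIntegral.integral_Iic_sub_Iic hf.integrableOn hf.integrableOn]
    ring
  rw [hsplit]
  exact (intervalIntegral.integral_hasDerivAt_right hf.intervalIntegrable
    hf.aestronglyMeasurable.stronglyMeasurableAtFilter hfx).const_add _

lemma integrable_eval_mul_exp_neg_mul_sq (p : ℝ[X]) {b : ℝ} (hb : 0 < b) :
    Integrable fun x => p.eval x * exp (-b * x ^ 2) := by
  simp_rw [eval_eq_sum_range, Finset.sum_mul]
  refine integrable_finsetSum _ fun i _ => ?_
  have h := (integrable_rpow_mul_exp_neg_mul_sq hb (s := i)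
    (by linarith [i.cast_nonneg (α := ℝ)])).const_mul (p.coeff i)
  simpa [rpow_natCast, mul_assoc] using h

noncomputable def physHermitePoly : ℕ → ℝ[X]
  | 0 => 1
  | n + 1 => C 2 * X * physHermitePoly n - derivative (physHermitePoly n)

lemma iteratedDeriv_exp_neg_sq (n : ℕ) :
    iteratedDeriv n (fun y : ℝ => exp (-y ^ 2))
      = fun x => (-1) ^ n * exp (-x ^ 2) * (physHermitePoly n).eval x := by
  induction n with
  | zero => funext x; simp [physHermitePoly]
  | succ n ih =>
    funext x
    have hexp : HasDerivAt (fun y : ℝ => exp (-y ^ 2)) (exp (-x ^ 2) * -(2 * x)) x := by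
      simpa using ((hasDerivAt_pow 2 x).neg).exp
    rw [iteratedDeriv_succ, ih,
      ((hexp.const_mul ((-1 : ℝ) ^ n)).fun_mul ((physHermitePoly n).hasDerivAt x)).deriv]
    simp only [physHermitePoly, eval_sub, eval_mul, eval_C, eval_X]
    ring

lemma physHermite_eq_eval (n : ℕ) (x : ℝ) : physHermite n x = (physHermitePoly n).eval x := by
  rw [physHermite, iteratedDeriv_exp_neg_sq]
  calc (-1) ^ n * exp (x ^ 2) * ((-1) ^ n * exp (-x ^ 2) * (physHermitePoly n).eval x)
      = ((-1) ^ n) ^ 2 * (exp (x ^ 2) * exp (-x ^ 2)) * (physHermitePoly n).eval x := by ring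
    _ = (physHermitePoly n).eval x := by simp [← exp_add, ← pow_mul, pow_mul']

lemma derivative_physHermitePoly_succ (k : ℕ) :
    derivative (physHermitePoly (k + 1)) = C (2 * (k + 1 : ℝ)) * physHermitePoly k := by
  induction k with
  | zero => simp [physHermitePoly]
  | succ k ih =>
    have hk : physHermitePoly (k + 1)
        = C 2 * X * physHermitePoly k - derivative (physHermitePoly k) := rfl
    rw [physHermitePoly]
    simp only [derivative_sub, derivative_mul, derivative_C, derivative_X, ih]
    rw [hk]
    simp only [map_mul, map_add, map_natCast, map_ofNat, map_one]
    push_cast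
    ring

noncomputable def hermiteFnConst (k : ℕ) : ℝ := (√(2 ^ k * k.factorial * √π))⁻¹

lemma hermiteFn_eq (k : ℕ) (x : ℝ) :
    hermiteFn k x = hermiteFnConst k * (physHermitePoly k).eval x * exp (-x ^ 2 / 2) := by
  rw [hermiteFn, physHermite_eq_eval, hermiteFnConst]

lemma hermiteFnConst_eq_mul_succ (k : ℕ) :
    hermiteFnConst k = √(2 * k + 2) * hermiteFnConst (k + 1) := by
  have hsucc : (2 : ℝ) ^ (k + 1) * (k + 1).factorial * √π
      = (2 * k + 2) * (2 ^ k * k.factorial * √π) := by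
    rw [Nat.factorial_succ]; push_cast; ring
  have hpos : √(2 * (k : ℝ) + 2) ≠ 0 := by positivity
  rw [hermiteFnConst, hermiteFnConst, hsucc, sqrt_mul (by positivity : (0 : ℝ) ≤ 2 * k + 2),
    mul_inv, ← mul_assoc, mul_inv_cancel₀ hpos, one_mul]

lemma hasDerivAt_hermiteFn' (k : ℕ) (x : ℝ) :
    HasDerivAt (hermiteFn k) (hermiteFnConst k
      * ((derivative (physHermitePoly k)).eval x - x * (physHermitePoly k).eval x)
      * exp (-x ^ 2 / 2)) x := by
  have hexp : HasDerivAt (fun y : ℝ => exp (-y ^ 2 / 2)) (exp (-x ^ 2 / 2) * -x) x := by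
    refine (((hasDerivAt_pow 2 x).fun_neg).div_const 2).exp.congr_deriv ?_
    push_cast; ring
  have h := (((physHermitePoly k).hasDerivAt x).const_mul (hermiteFnConst k)).fun_mul hexp
  rw [funext (hermiteFn_eq k)]
  refine h.congr_deriv ?_
  ring

lemma hasDerivAt_hermiteFn (k : ℕ) (x : ℝ) :
    HasDerivAt (hermiteFn k) (x * hermiteFn k x - √(2 * k + 2) * hermiteFn (k + 1) x) x := by
  convert hasDerivAt_hermiteFn' k x using 1
  have hH : (physHermitePoly (k + 1)).eval x
      = 2 * x * (physHermitePoly k).eval x - (derivative (physHermitePoly k)).eval x := by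
    simp [physHermitePoly]
  rw [hermiteFn_eq, hermiteFn_eq, hH, hermiteFnConst_eq_mul_succ k]
  ring

lemma hasDerivAt_hermiteFn_succ (k : ℕ) (x : ℝ) :
    HasDerivAt (hermiteFn (k + 1))
      (√(2 * k + 2) * hermiteFn k x - x * hermiteFn (k + 1) x) x := by
  convert hasDerivAt_hermiteFn' (k + 1) x using 1
  have hsq : √(2 * (k : ℝ) + 2) ^ 2 = 2 * k + 2 := sq_sqrt (by positivity)
  rw [derivative_physHermitePoly_succ, hermiteFn_eq, hermiteFn_eq, hermiteFnConst_eq_mul_succ k]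
  simp only [eval_mul, eval_C]
  linear_combination hermiteFnConst (k + 1) * (physHermitePoly k).eval x
    * exp (-x ^ 2 / 2) * hsq

lemma hermiteFn_succ_succ (k : ℕ) (x : ℝ) :
    √(2 * k + 4) * hermiteFn (k + 2) x
      = 2 * x * hermiteFn (k + 1) x - √(2 * k + 2) * hermiteFn k x := by
  have h := (hasDerivAt_hermiteFn (k + 1) x).unique (hasDerivAt_hermiteFn_succ k x)
  rw [show 2 * ((k + 1 : ℕ) : ℝ) + 2 = 2 * k + 4 by push_cast; ring] at h
  linear_combination -h

lemma hermiteFn_one (x : ℝ) : √2 * hermiteFn 1 x = 2 * x * hermiteFn 0 x := by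
  have hc := hermiteFnConst_eq_mul_succ 0
  rw [hermiteFn_eq, hermiteFn_eq]
  norm_num at hc
  simp only [physHermitePoly, eval_sub, eval_mul, eval_C, eval_X, eval_one, derivative_one,
    eval_zero, hc]
  ring

lemma integrable_hermiteFn (k : ℕ) : Integrable (hermiteFn k) := by
  refine ((integrable_eval_mul_exp_neg_mul_sq (physHermitePoly k) (b := 1 / 2)
    (by norm_num)).const_mul (hermiteFnConst k)).congr (ae_of_all _ fun x => ?_)
  rw [hermiteFn_eq]
  ring_nf

lemma pGUE_succ_eq_cdDensity (m : ℕ) :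
    pGUE (m + 1) = cdDensity √(2 * m + 2) (hermiteFn m) (hermiteFn (m + 1)) := by
  funext x
  induction m with
  | zero =>
    have h2 : √(2 : ℝ) ^ 2 = 2 := sq_sqrt (by norm_num)
    simp only [pGUE, cdDensity, Finset.sum_range_one, CharP.cast_eq_zero, mul_zero, zero_add]
    linear_combination -(hermiteFn 0 x ^ 2) / 2 * h2 - √2 * hermiteFn 1 x / 2 * hermiteFn_one x
  | succ m ih =>
    have hr : √(2 * (m : ℝ) + 2) ^ 2 = 2 * m + 2 := sq_sqrt (by positivity)
    have hr' : √(2 * (m : ℝ) + 4) ^ 2 = 2 * m + 4 := sq_sqrt (by positivity)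
    rw [pGUE, Finset.sum_range_succ, ← pGUE, ih,
      show 2 * ((m + 1 : ℕ) : ℝ) + 2 = 2 * m + 4 by push_cast; ring]
    simp only [cdDensity]
    linear_combination (√(2 * (m : ℝ) + 2) * hermiteFn m x
        - √(2 * (m : ℝ) + 4) * hermiteFn (m + 2) x) / 2 * hermiteFn_succ_succ m x
      + hermiteFn (m + 1) x ^ 2 / 2 * (hr - hr')

lemma tauFn_succ (m : ℕ) :
    tauFn (m + 1)
      = fun y => √(2 * m + 2) / 2 * (hermiteFn m y * signIntegral (hermiteFn (m + 1)) y) := by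
  have hcoef : √(((m + 1 : ℕ) : ℝ) / 2) = √(2 * m + 2) / 2 := by
    rw [show 2 * (m : ℝ) + 2 = 2 ^ 2 * (((m + 1 : ℕ) : ℝ) / 2) by push_cast; ring,
      sqrt_mul' _ (by positivity), sqrt_sq zero_le_two]
    ring
  funext y
  rw [tauFn, Nat.add_sub_cancel, hcoef, signIntegral]
  ring

theorem gse_density_ode_general (n : ℕ) (ps : ℝ → ℝ)
    (hps : ps = fun y => pGUE (2*n+1) y + tauFn (2*n+1) y) (x : ℝ) :
    2 * iteratedDeriv 3 ps x + 2*(4*n + 1 - x^2) * deriv ps x - 4*x * ps x =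
      -3 * deriv (pGUE (2*n+1)) x - 6*x * pGUE (2*n+1) x := by
  have hs : (4 * n + 1 : ℝ) = √(2 * ((2 * n : ℕ) : ℝ) + 2) ^ 2 - 1 := by
    rw [sq_sqrt (by positivity)]; push_cast; ring
  have hps' : ps = gseDensity √(2 * ((2 * n : ℕ) : ℝ) + 2) (hermiteFn (2 * n))
      (hermiteFn (2 * n + 1)) (signIntegral (hermiteFn (2 * n + 1))) := by
    rw [hps, pGUE_succ_eq_cdDensity, tauFn_succ]
    rfl
  rw [hps', pGUE_succ_eq_cdDensity, hs]
  exact gseDensity_ode (hasDerivAt_hermiteFn _) (hasDerivAt_hermiteFn_succ _)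
    (fun y => hasDerivAt_signIntegral (integrable_hermiteFn _)
      (hasDerivAt_hermiteFn _ y).continuousAt) x

theorem gse_density_ode (n : ℕ) (hn : 1 ≤ n) (ps : ℝ → ℝ)
    (hps : ps = fun y => pGUE (2*n+1) y + tauFn (2*n+1) y) (x : ℝ) :
    2 * iteratedDeriv 3 ps x + 2*(4*n + 1 - x^2) * deriv ps x - 4*x * ps x =
      -3 * deriv (pGUE (2*n+1)) x - 6*x * pGUE (2*n+1) x :=
  gse_density_ode_general n ps hps x
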